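/- A 'context-changing' formation rule destroys the main step of cut elimination: consider a unary connective D with right rule 'from A, B ⊢ C infer A ⊢ D(B,C)' (the context changes from {A,B} to {A}) and the corresponding explicit reflection left rule 'from C ⊢ Δ infer D(B,C) ⊢ Δ'. Then there exist atoms a, b, c, d such that the sequent a ⊢ d is derivable with cut on D(b,c) but a ⊢ d is not derivable cut-free. -/
import Mathlib


/-- Formulas: atoms and a binary connective D. -/
inductive DFormula where
  | atom : ℕ → DFormula
  | D : DFormula → DFormula → DFormula

/-- Derivability with cut, with the context-changing right rule for D, the
explicit-reflection left rule, and an extra axiom [a, b] ⊢ c (atoms 0,1,2). -/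
inductive DDerivCut : List DFormula → List DFormula → Prop where
  | ax (A : DFormula) : DDerivCut [A] [A]
  | extra : DDerivCut [DFormula.atom 0, DFormula.atom 1] [DFormula.atom 2]
  | dR {A B C : DFormula} :
      DDerivCut [A, B] [C] → DDerivCut [A] [DFormula.D B C]
  | dL {B C : DFormula} {Δ : List DFormula} :
      DDerivCut [C] Δ → DDerivCut [DFormula.D B C] Δ
  | cut {Γ Δ : List DFormula} {A : DFormula} :
      DDerivCut Γ [A] → DDerivCut [A] Δ → DDerivCut Γ Δ

/-- The same calculus without cut. -/
inductive DDerivCF : List DFormula → List DFormula → Prop where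
  | ax (A : DFormula) : DDerivCF [A] [A]
  | extra : DDerivCF [DFormula.atom 0, DFormula.atom 1] [DFormula.atom 2]
  | dR {A B C : DFormula} :
      DDerivCF [A, B] [C] → DDerivCF [A] [DFormula.D B C]
  | dL {B C : DFormula} {Δ : List DFormula} :
      DDerivCF [C] Δ → DDerivCF [DFormula.D B C] Δ

/-- A context-changing formation rule destroys the main step of cut elimination:
some atomic sequent is derivable with cut (via D(b,c)) but not cut-free. -/
theorem context_changing_breaks_cut_elimination :
    ∃ a d : ℕ, a ≠ d ∧
      DDerivCut [DFormula.atom a] [DFormula.atom d] ∧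
      ¬ DDerivCF [DFormula.atom a] [DFormula.atom d] := by
  refine ⟨0, 2, by decide, ?_, ?_⟩
  · exact DDerivCut.cut (DDerivCut.dR DDerivCut.extra)
      (DDerivCut.dL (DDerivCut.ax (DFormula.atom 2)))
  · intro h
    cases h
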